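/- arXiv:1111.3772 — 6 statements merged into one kernel-verified Lean document; each statement's English description precedes it below -/
import Mathlib

section
/- Let Γ be a group containing a normal subgroup A of finite index which is finitely generated, abelian and torsion-free. Let H ≤ L be finite subgroups of Γ. Then the centralizer C_Γ(L) has finite index in C_Γ(H) if and only if the torsion-free ranks of the abelian groups C_A(H) = A ∩ C_Γ(H) and C_A(L) = A ∩ C_Γ(L) are equal. -/
/-! Passing to the finite-index subgroup `A` does not change whether `C_Γ(L)` has finite index
in `C_Γ(H)`, so it suffices to compare the subgroups `C_A(L) ≤ C_A(H)` of the finitely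
generated abelian group `A`. There, by rank–nullity over `ℤ`, the quotient `C_A(H) / C_A(L)`
has rank `rk C_A(H) - rk C_A(L)`, and a finitely generated abelian group is finite exactly
when it is torsion, i.e. of rank zero. -/

theorem Module.rank_eq_zero_iff_finite_of_int {M : Type*} [AddCommGroup M] [Module.Finite ℤ M] :
    Module.rank ℤ M = 0 ↔ Finite M := by
  rw [Module.rank_eq_zero_iff_isTorsion]
  exact ⟨Module.finite_of_fg_torsion M,
    fun _ ↦ isAddTorsion_iff_isTorsion_int.mp fun x ↦ isOfFinAddOrder_of_finite x⟩

instance AddSubgroup.moduleFinite {M : Type*} [AddCommGroup M] [Module.Finite ℤ M]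
    (S : AddSubgroup M) : Module.Finite ℤ S := by
  have : IsNoetherian ℤ M := isNoetherian_of_isNoetherianRing_of_finite ℤ M
  exact Module.Finite.equiv (AddEquiv.refl _ : S.toIntSubmodule ≃+ S).toIntLinearEquiv

theorem AddSubgroup.index_ne_zero_iff_rank_eq {M : Type*} [AddCommGroup M] [Module.Finite ℤ M]
    (N : AddSubgroup M) : N.index ≠ 0 ↔ Module.rank ℤ N = Module.rank ℤ M := by
  have hsum : Module.rank ℤ (M ⧸ N.toIntSubmodule) + Module.rank ℤ N = Module.rank ℤ M :=
    rank_quotient_add_rank_of_isDomain N.toIntSubmodule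
  rw [index_ne_zero_iff_finite]
  change Finite (M ⧸ N.toIntSubmodule) ↔ _
  rw [← Module.rank_eq_zero_iff_finite_of_int]
  constructor
  · intro h
    rw [← hsum, h, zero_add]
  · intro h
    rw [← h] at hsum
    exact Cardinal.eq_of_add_eq_add_right (hsum.trans (zero_add _).symm)
      (Module.rank_lt_aleph0 ℤ N)

theorem AddSubgroup.relIndex_ne_zero_iff_rank_eq {M : Type*} [AddCommGroup M] [Module.Finite ℤ M]
    {T S : AddSubgroup M} (hTS : T ≤ S) :
    T.relIndex S ≠ 0 ↔ Module.rank ℤ T = Module.rank ℤ S := by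
  rw [relIndex, index_ne_zero_iff_rank_eq, (addSubgroupOfEquivOfLe hTS).toIntLinearEquiv.rank_eq]

theorem Subgroup.relIndex_comap_ne_zero_iff {G G' : Type*} [Group G] [Group G'] (f : G' →* G)
    [f.range.FiniteIndex] (J K : Subgroup G) :
    (J.comap f).relIndex (K.comap f) ≠ 0 ↔ J.relIndex K ≠ 0 := by
  refine ⟨fun h ↦ ?_, relIndex_comap_ne_zero f⟩
  rw [relIndex_comap, map_comap_eq] at h
  have : f.range.IsFiniteRelIndex K := isFiniteRelIndex_of_finiteIndex
  exact relIndex_ne_zero_trans h ((inf_relIndex_right f.range K).trans_ne relIndex_ne_zero)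

theorem stmt5_general (Γ : Type) [Group Γ] (A : Type) [AddCommGroup A] (hfg : AddGroup.FG A)
    (ι : Multiplicative A →* Γ) (hindex : ι.range.FiniteIndex)
    (H L : Subgroup Γ) (hHL : H ≤ L) :
    (Subgroup.centralizer (L : Set Γ)).relIndex (Subgroup.centralizer (H : Set Γ)) ≠ 0 ↔
      Module.rank ℤ
          (Subgroup.toAddSubgroup' ((Subgroup.centralizer (H : Set Γ)).comap ι)) =
        Module.rank ℤ
          (Subgroup.toAddSubgroup' ((Subgroup.centralizer (L : Set Γ)).comap ι)) := by
  have : Module.Finite ℤ A := Module.Finite.iff_addGroup_fg.mpr hfg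
  have hCA : Subgroup.toAddSubgroup' ((Subgroup.centralizer (L : Set Γ)).comap ι) ≤
      Subgroup.toAddSubgroup' ((Subgroup.centralizer (H : Set Γ)).comap ι) :=
    Subgroup.toAddSubgroup'.monotone (Subgroup.comap_mono (Subgroup.centralizer_le hHL))
  rw [← Subgroup.relIndex_comap_ne_zero_iff ι, eq_comm]
  exact AddSubgroup.relIndex_ne_zero_iff_rank_eq hCA

/-- Theorem 3.3 (virtually abelian case): let `Γ` contain a normal subgroup of finite
index which is finitely generated, abelian and torsion free (realized as the image of
an injective homomorphism `ι` from an additively written group `A`), and let `H ≤ L`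
be finite subgroups of `Γ`.  Then `C_Γ(L)` has finite index in `C_Γ(H)` if and only if
the torsion-free ranks of `C_A(H) = A ∩ C_Γ(H)` and `C_A(L) = A ∩ C_Γ(L)` coincide. -/
theorem stmt5 (Γ : Type) [Group Γ] (A : Type) [AddCommGroup A] (hfg : AddGroup.FG A)
    (htf : ∀ (n : ℕ) (a : A), 0 < n → n • a = 0 → a = 0)
    (ι : Multiplicative A →* Γ) (hinj : Function.Injective ι)
    (hnormal : ι.range.Normal) (hindex : ι.range.FiniteIndex)
    (H L : Subgroup Γ) (hHL : H ≤ L) (hHfin : Finite H) (hLfin : Finite L) :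
    (Subgroup.centralizer (L : Set Γ)).relIndex (Subgroup.centralizer (H : Set Γ)) ≠ 0 ↔
      Module.rank ℤ
          (Subgroup.toAddSubgroup' ((Subgroup.centralizer (H : Set Γ)).comap ι)) =
        Module.rank ℤ
          (Subgroup.toAddSubgroup' ((Subgroup.centralizer (L : Set Γ)).comap ι)) :=
  stmt5_general Γ A hfg ι hindex H L hHL
end

section
/- Let Γ be a group with a torsion-free normal subgroup G. Let H be a finite subgroup of Γ, let L be a subgroup of H, and let g ∈ G be such that the conjugate g⁻¹Lg is contained in H. Then g⁻¹Lg = L. -/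
/-- The definition of `Monoid.IsTorsionFree` from the older Mathlib (removed since). -/
def Monoid.IsTorsionFree (G : Type*) [Monoid G] : Prop :=
  ∀ g : G, g ≠ 1 → ¬IsOfFinOrder g

/-! If `g` lies in a torsion-free normal subgroup `G` and both `x` and `g x g⁻¹` lie in a finite
subgroup `H`, then the commutator `⁅g, x⁆ = (g x g⁻¹) x⁻¹` lies in `G ∩ H`, so it has finite order
in a torsion-free group and is trivial: `g` commutes with `x`. -/

open scoped commutatorElement

theorem Monoid.IsTorsionFree.eq_one_of_mem {Γ : Type*} [Group Γ] {G : Subgroup Γ}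
    (htf : Monoid.IsTorsionFree G) {z : Γ} (hz : z ∈ G) (hfin : IsOfFinOrder z) : z = 1 := by
  by_contra hne
  exact htf ⟨z, hz⟩ (by simpa using hne) (Submonoid.isOfFinOrder_coe.1 hfin)

theorem MulAut.conj_eq_self_of_mem_finite {Γ : Type*} [Group Γ] {G H : Subgroup Γ}
    [G.Normal] (htf : Monoid.IsTorsionFree G) [Finite H] {g x : Γ} (hg : g ∈ G) (hx : x ∈ H)
    (hconj : MulAut.conj g x ∈ H) : MulAut.conj g x = x := by
  have hcG : ⁅g, x⁆ ∈ G :=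
    Subgroup.commutator_le_left G ⊤ (Subgroup.commutator_mem_commutator hg (Subgroup.mem_top x))
  have hcH : ⁅g, x⁆ ∈ H := by
    rw [commutatorElement_def]
    exact mul_mem hconj (inv_mem hx)
  have hc : ⁅g, x⁆ = 1 :=
    htf.eq_one_of_mem hcG (Submonoid.isOfFinOrder_coe.2 (isOfFinOrder_of_finite (⟨_, hcH⟩ : H)))
  rw [conj_eq_commutatorElement_mul, hc, one_mul]

theorem Subgroup.map_eq_self_of_forall_mem {Γ : Type*} [Group Γ] {L : Subgroup Γ}
    (f : Γ →* Γ) (hf : ∀ x ∈ L, f x = x) : L.map f = L := by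
  ext y
  constructor
  · rintro ⟨x, hx, rfl⟩
    rwa [hf x hx]
  · exact fun hy ↦ ⟨y, hy, hf y hy⟩

/-- Lemma 3.4 (first assertion): if `G` is a torsion-free normal subgroup of `Γ`,
`H` a finite subgroup, `L ≤ H`, and `g ∈ G` is such that `g⁻¹ L g ≤ H`,
then `g⁻¹ L g = L`. -/
theorem stmt6 (Γ : Type) [Group Γ] (G : Subgroup Γ) (hnormal : G.Normal)
    (htf : Monoid.IsTorsionFree G)
    (H : Subgroup Γ) (hHfin : Finite H) (L : Subgroup Γ) (hLH : L ≤ H)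
    (g : Γ) (hg : g ∈ G)
    (hconj : L.map (MulAut.conj g⁻¹).toMonoidHom ≤ H) :
    L.map (MulAut.conj g⁻¹).toMonoidHom = L :=
  Subgroup.map_eq_self_of_forall_mem _ fun x hx ↦
    MulAut.conj_eq_self_of_mem_finite htf (inv_mem hg) (hLH hx) (hconj ⟨x, hx, rfl⟩)
end

section
/- Let Γ be a group with a torsion-free normal subgroup G of finite index. Let H be a finite subgroup of Γ which is maximal among the finite subgroups of Γ, and suppose the centralizer C_G(H) is trivial. Then the normalizer of H in Γ equals H, i.e. N_Γ(H) = H. -/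
/-!
Every `g ∈ N_Γ(H)` acts on the finite group `H` by conjugation, so some positive power of `g`
centralizes `H`. If moreover `g ∈ G`, that power lies in `C_G(H) = 1`, and torsion-freeness of `G`
forces `g = 1`. Hence `N_Γ(H)` meets `G` trivially and, `G` having finite index, `N_Γ(H)` is
finite; as it contains `H`, maximality gives `N_Γ(H) = H`.
-/

namespace Subgroup

variable {Γ : Type*} [Group Γ]

theorem finite_of_inf_eq_bot_of_finiteIndex {G K : Subgroup Γ} [G.FiniteIndex]
    (h : K ⊓ G = ⊥) : Finite K := by
  have hrel : G.relIndex K ≠ 0 := (isFiniteRelIndex_of_finiteIndex (K := K)).relIndex_ne_zero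
  rw [← inf_relIndex_right, inf_comm, h, relIndex_bot_left] at hrel
  exact Nat.finite_of_card_ne_zero hrel

theorem exists_pow_mem_centralizer_of_mem_normalizer {H : Subgroup Γ} [Finite H] {g : Γ}
    (hg : g ∈ normalizer (H : Set Γ)) : ∃ n, 0 < n ∧ g ^ n ∈ centralizer (H : Set Γ) := by
  obtain ⟨n, hn, hpow⟩ :=
    (isOfFinOrder_of_finite (H.normalizerMonoidHom ⟨g, hg⟩)).exists_pow_eq_one
  have hker : (⟨g, hg⟩ : normalizer (H : Set Γ)) ^ n ∈ H.normalizerMonoidHom.ker := by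
    rw [MonoidHom.mem_ker, map_pow, hpow]
  rw [normalizerMonoidHom_ker, mem_subgroupOf] at hker
  exact ⟨n, hn, hker⟩

theorem normalizer_inf_eq_bot_of_centralizer_inf_eq_bot {G H : Subgroup Γ} [Finite H]
    (htf : ∀ g : G, g ≠ 1 → ¬IsOfFinOrder g) (hcent : centralizer (H : Set Γ) ⊓ G = ⊥) :
    normalizer (H : Set Γ) ⊓ G = ⊥ := by
  rw [eq_bot_iff_forall]
  rintro g ⟨hgN, hgG⟩
  obtain ⟨n, hn, hgn⟩ := exists_pow_mem_centralizer_of_mem_normalizer hgN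
  have hgn_one : g ^ n = 1 := by
    rw [← mem_bot, ← hcent]
    exact ⟨hgn, pow_mem hgG n⟩
  have hfin : IsOfFinOrder (⟨g, hgG⟩ : G) :=
    Submonoid.isOfFinOrder_coe.mp (isOfFinOrder_iff_pow_eq_one.mpr ⟨n, hn, hgn_one⟩)
  by_contra hg
  exact htf ⟨g, hgG⟩ (fun h ↦ hg (congrArg Subtype.val h)) hfin

end Subgroup

theorem stmt9_general (Γ : Type) [Group Γ] (G : Subgroup Γ)
    (hindex : G.FiniteIndex) (htf : ∀ g : G, g ≠ 1 → ¬IsOfFinOrder g)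
    (H : Subgroup Γ) (hHfin : Finite H)
    (hmax : ∀ K : Subgroup Γ, Finite K → H ≤ K → K = H)
    (hcent : Subgroup.centralizer (H : Set Γ) ⊓ G = ⊥) :
    Subgroup.normalizer (H : Set Γ) = H :=
  hmax _ (Subgroup.finite_of_inf_eq_bot_of_finiteIndex
      (Subgroup.normalizer_inf_eq_bot_of_centralizer_inf_eq_bot htf hcent))
    Subgroup.le_normalizer

/-- Lemma 4.6(i), group-theoretic part: if `G` is a torsion-free normal subgroup of
finite index in `Γ`, and `H` is a maximal finite subgroup of `Γ` with trivial
centralizer in `G`, then `N_Γ(H) = H`. -/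
theorem stmt9 (Γ : Type) [Group Γ] (G : Subgroup Γ) (hnormal : G.Normal)
    (hindex : G.FiniteIndex) (htf : ∀ g : G, g ≠ 1 → ¬IsOfFinOrder g)
    (H : Subgroup Γ) (hHfin : Finite H)
    (hmax : ∀ K : Subgroup Γ, Finite K → H ≤ K → K = H)
    (hcent : Subgroup.centralizer (H : Set Γ) ⊓ G = ⊥) :
    Subgroup.normalizer (H : Set Γ) = H :=
  stmt9_general Γ G hindex htf H hHfin hmax hcent
end

section
/- Let Γ be a group containing a normal subgroup A of finite index which is torsion-free and abelian. Let S be a finite subgroup of Γ whose centralizer in A is trivial, i.e. C_A(S) = 1. Then there exists exactly one subgroup F of Γ such that F is finite, S ≤ F, and F is maximal among the finite subgroups of Γ. -/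
/-!
Conjugation makes `A` a `Γ`-module, and the differences between a fixed transversal of `A` and
its translates form a 1-cocycle `c : Γ → A` with `c a = a^{-[Γ:A]}` on `A`. Twisting by `c`
gives an affine action of `Γ` on `A` in which `A` acts by nontrivial translations, so every
stabiliser meets `A` trivially and is finite. A finite subgroup `K` fixes a point once the
cocycle is scaled by `|K|` (namely the inverse of the product of `c` over `K`). Since `A` is
torsion-free and the fixed points of `S` in `A` form `C_A(S) = 1`, all these points determine a
single point fixed by `S`, whose stabiliser contains every finite subgroup containing `S`.
-/

open groupCohomology

section Cocycle

variable {G M : Type*} [Group G] [CommGroup M] [MulDistribMulAction G M]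

theorem smul_div_eq_pow_of_le [IsMulTorsionFree M] {S K : Subgroup G} (hSK : S ≤ K)
    (hfix : ∀ y : M, (∀ s ∈ S, s • y = y) → y = 1) {f : G → M} {a b : ℕ} (ha : a ≠ 0)
    {x y : M} (hx : ∀ g ∈ K, g • x / x = f g ^ a) (hy : ∀ s ∈ S, s • y / y = f s ^ b)
    {g : G} (hg : g ∈ K) : g • y / y = f g ^ b := by
  have hxy : x ^ b = y ^ a := by
    refine div_eq_one.1 (hfix _ fun s hs => ?_)
    rw [smul_div', smul_pow', smul_pow', div_eq_iff_eq_mul.1 (hx s (hSK hs)),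
      div_eq_iff_eq_mul.1 (hy s hs), mul_pow, mul_pow, ← pow_mul, ← pow_mul, mul_comm a b,
      mul_div_mul_left_eq_div]
  refine pow_left_injective ha ?_
  dsimp only
  rw [div_pow, ← smul_pow', ← hxy, smul_pow', ← div_pow, hx g hg, ← pow_mul, ← pow_mul, mul_comm]

namespace groupCohomology.IsMulCocycle₁

variable {f : G → M} (hf : IsMulCocycle₁ f)
include hf

theorem pow (n : ℕ) : IsMulCocycle₁ (f ^ n) := fun g h => by
  simp only [Pi.pow_apply, hf g h, mul_pow, smul_pow']

/-- The stabiliser of `x` for the affine action `g ⋆ y = g • y / f g`. -/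
def stabilizer (x : M) : Subgroup G where
  carrier := {g | g • x / x = f g}
  one_mem' := by simp [map_one_of_isMulCocycle₁ hf]
  mul_mem' {g h} (hg : g • x / x = f g) (hh : h • x / x = f h) :
      (g * h) • x / x = f (g * h) := by
    rw [hf, mul_smul, ← hh, ← hg, smul_div', div_mul_div_cancel]
  inv_mem' {g} (hg : g • x / x = f g) : g⁻¹ • x / x = f g⁻¹ := by
    have hinv := map_inv_of_isMulCocycle₁ hf g
    rw [← hg, inv_div] at hinv
    rw [eq_inv_smul_iff.2 hinv, smul_div', inv_smul_smul]

theorem mem_stabilizer_iff {x : M} {g : G} : g ∈ hf.stabilizer x ↔ g • x / x = f g := Iff.rfl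

theorem exists_smul_div_eq_pow_card (K : Subgroup G) [Finite K] :
    ∃ x : M, ∀ g ∈ K, g • x / x = f g ^ Nat.card K := by
  have := Fintype.ofFinite K
  refine ⟨(∏ k : K, f k)⁻¹, fun g hg => ?_⟩
  have hprod : g • ∏ k : K, f k = (∏ k : K, f k) / f g ^ Nat.card K := by
    rw [Finset.smul_prod', Nat.card_eq_fintype_card, ← Finset.card_univ, ← Finset.prod_const,
      ← Finset.prod_div_distrib]
    refine Fintype.prod_equiv (Equiv.mulLeft ⟨g, hg⟩) _ _ fun k => ?_
    simp [hf g k]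
  rw [smul_inv', hprod, inv_div_inv, div_div_cancel]

theorem exists_le_stabilizer [IsMulTorsionFree M] {S : Subgroup G} [Finite S]
    (hfix : ∀ y : M, (∀ s ∈ S, s • y = y) → y = 1) :
    ∃ x : M, ∀ K : Subgroup G, Finite K → S ≤ K → K ≤ (hf.pow (Nat.card S)).stabilizer x := by
  obtain ⟨x, hx⟩ := hf.exists_smul_div_eq_pow_card S
  refine ⟨x, fun K hK hSK g hg => ?_⟩
  obtain ⟨y, hy⟩ := hf.exists_smul_div_eq_pow_card K
  exact smul_div_eq_pow_of_le hSK hfix Nat.card_pos.ne' hy hx hg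

theorem stabilizer_inf_eq_bot {A : Subgroup G} (hA : ∀ a : A, ∀ y : M, (a : G) • y = y)
    (hfA : ∀ a : A, f a = 1 → a = 1) (x : M) : hf.stabilizer x ⊓ A = ⊥ := by
  refine (Subgroup.eq_bot_iff_forall _).2 fun a ⟨hax, ha⟩ => congrArg Subtype.val (hfA ⟨a, ha⟩ ?_)
  rw [← hf.mem_stabilizer_iff.1 hax, hA ⟨a, ha⟩, div_self']

end groupCohomology.IsMulCocycle₁

end Cocycle

namespace Subgroup

open MulOpposite leftTransversals
open scoped IsMulCommutative

variable {G : Type*} [Group G]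

theorem finite_of_inf_eq_bot {K A : Subgroup G} [A.FiniteIndex] (h : K ⊓ A = ⊥) : Finite K := by
  apply Nat.finite_of_card_ne_zero
  rw [← relIndex_bot_left, ← h, inf_comm, inf_relIndex_right]
  exact mt index_eq_zero_of_relIndex_eq_zero FiniteIndex.index_ne_zero

variable (A : Subgroup G) [A.Normal]

noncomputable abbrev conjAction : MulDistribMulAction G A :=
  MulDistribMulAction.compHom A (MulAut.conjNormal (H := A))

attribute [local instance] conjAction

theorem coe_conjAction_smul (g : G) (a : A) : ((g • a : A) : G) = g * a * g⁻¹ := rfl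

theorem conjAction_smul_eq_self [IsMulCommutative A] (a y : A) : (a : G) • y = y := by
  ext
  rw [coe_conjAction_smul, ← coe_mul, mul_comm, coe_mul, mul_inv_cancel_right]

variable {A} in
theorem eq_one_of_forall_conjAction_smul_eq {S : Subgroup G}
    (hS : centralizer (S : Set G) ⊓ A = ⊥) (y : A) (hy : ∀ s ∈ S, s • y = y) : y = 1 := by
  have hyS : (y : G) ∈ centralizer (S : Set G) ⊓ A := by
    refine ⟨mem_centralizer_iff.2 fun s hs => ?_, y.2⟩
    rw [← mul_inv_eq_iff_eq_mul, ← coe_conjAction_smul, hy s hs]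
  rw [hS] at hyS
  exact Subtype.ext ((mem_bot).1 hyS)

-- `c g` is the difference between a transversal `T` and its translate `T g⁻¹`, as in the
-- abelian case of the Schur–Zassenhaus theorem.
theorem exists_isMulCocycle₁_conjAction [IsMulCommutative A] [A.FiniteIndex] :
    ∃ c : G → A, IsMulCocycle₁ c ∧ ∀ a : A, c a = (a ^ A.index)⁻¹ := by
  obtain ⟨T⟩ := (inferInstance : Nonempty A.LeftTransversal)
  refine ⟨fun g => diff (MonoidHom.id A) T (op g⁻¹ • T), fun g h => ?_, fun a => ?_⟩
  · dsimp only
    rw [mul_inv_rev, op_mul, mul_smul, ← diff_mul_diff _ T (op g⁻¹ • T), smul_diff_smul',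
      mul_comm]
    congr 1
    ext
    simp [coe_conjAction_smul]
  · show diff _ T (op (a : G)⁻¹ • T) = _
    rw [← inv_pow, ← coe_inv, smul_diff', diff_self, one_mul]

end Subgroup

attribute [local instance] Subgroup.conjAction

open scoped IsMulCommutative

/-- Lemma 4.8 (virtually abelian case): let `Γ` contain a torsion-free abelian normal
subgroup `A` of finite index, and let `S` be a finite subgroup with `C_A(S) = 1`.
Then there is exactly one maximal finite subgroup of `Γ` containing `S`. -/
theorem stmt10 (Γ : Type) [Group Γ] (A : Subgroup Γ) (hnormal : A.Normal)
    (hindex : A.FiniteIndex)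
    (hab : ∀ a b : Γ, a ∈ A → b ∈ A → a * b = b * a)
    (htf : ∀ g : A, g ≠ 1 → ¬IsOfFinOrder g)
    (S : Subgroup Γ) (hSfin : Finite S)
    (hcent : Subgroup.centralizer (S : Set Γ) ⊓ A = ⊥) :
    ∃! F : Subgroup Γ,
      Finite F ∧ S ≤ F ∧ ∀ K : Subgroup Γ, Finite K → F ≤ K → K = F := by
  have : IsMulCommutative A := IsMulCommutative.of_setLike_mul_comm fun a ha b hb => hab a b ha hb
  have : IsMulTorsionFree A := isMulTorsionFree_iff_not_isOfFinOrder.2 fun a ha => htf a ha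
  obtain ⟨c, hc, hcA⟩ := A.exists_isMulCocycle₁_conjAction
  obtain ⟨x, hx⟩ := hc.exists_le_stabilizer (Subgroup.eq_one_of_forall_conjAction_smul_eq hcent)
  set F := (hc.pow (Nat.card S)).stabilizer x
  have hcA_pow : ∀ a : A, (c ^ Nat.card S) a = 1 → a = 1 := fun a h => by
    rwa [Pi.pow_apply, hcA, inv_pow, inv_eq_one, ← pow_mul,
      pow_eq_one_iff_left (mul_ne_zero hindex.index_ne_zero Nat.card_pos.ne')] at h
  have hF : Finite F := Subgroup.finite_of_inf_eq_bot <|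
    (hc.pow _).stabilizer_inf_eq_bot A.conjAction_smul_eq_self hcA_pow x
  have hSF : S ≤ F := hx S hSfin le_rfl
  refine ⟨F, ⟨hF, hSF, fun K hK hFK => le_antisymm (hx K hK (hSF.trans hFK)) hFK⟩, ?_⟩
  rintro F' ⟨hF', hSF', hmax⟩
  exact (hmax F hF (hx F' hF' hSF')).symm
end

section
/- Let H be a finite group acting on an abelian group A by automorphisms, and suppose A has Prüfer rank at most r for some natural number r. Then the first group cohomology group H¹(H, A) is finite. -/
/-!
Every 1-cocycle `z` satisfies `z (g * h) = g • z h + z g`; summing over `h` shows that `|H| • z`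
is the coboundary of `-∑ h, z h`, so `H¹(H, A)` has exponent dividing `|H|`. On the other hand
`H¹(H, A)` is a quotient of a subgroup of `H → A ≅ A ^ |H|`, and Prüfer rank is subadditive in
extensions, so `H¹(H, A)` has rank at most `|H| * r`. An abelian group of rank at most `R` and
exponent dividing `n` is finite: each subgroup generated by `R` elements has at most `n ^ R`
elements, so the group cannot contain `n ^ R + 1` distinct elements.
-/

def HasPruferRankLE (M : Type*) [AddCommGroup M] (r : ℕ) : Prop :=
  ∀ S : AddSubgroup M, S.FG →
    ∃ s : Finset M, s.card ≤ r ∧ AddSubgroup.closure (s : Set M) = S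

namespace AddSubgroup

variable {M N : Type*} [AddCommGroup M] [AddCommGroup N]

theorem FG.map {S : AddSubgroup M} (hS : S.FG) (f : M →+ N) : (S.map f).FG := by
  classical
  obtain ⟨s, rfl⟩ := hS
  exact ⟨s.image f, by rw [Finset.coe_image, AddMonoidHom.map_closure]⟩

theorem FG.of_le {S T : AddSubgroup M} (hT : T.FG) (hST : S ≤ T) : S.FG :=
  (Submodule.fg_iff_addSubgroup_fg S.toIntSubmodule).1 <|
    ((Submodule.fg_iff_addSubgroup_fg T.toIntSubmodule).2 hT).of_le hST

theorem inf_ker_sup_eq_of_map_eq {S U : AddSubgroup M} {f : M →+ N} (hUS : U ≤ S)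
    (hmap : U.map f = S.map f) : S ⊓ f.ker ⊔ U = S := by
  rw [inf_sup_assoc_of_le _ hUS, sup_comm, map_eq_map_iff.1 hmap]
  exact inf_eq_left.2 le_sup_left

theorem closure_subset_range_sum_nsmul {n : ℕ} (hn : 0 < n) (htor : ∀ x : M, n • x = 0)
    (s : Finset M) :
    (closure (s : Set M) : Set M) ⊆ Set.range fun c : s → Fin n => ∑ a, (c a : ℕ) • (a : M) := by
  intro x hx
  rw [SetLike.mem_coe, ← mem_toAddSubmonoid, closure_toAddSubmonoid_of_isOfFinAddOrder
    fun y _ => isOfFinAddOrder_iff_nsmul_eq_zero.2 ⟨n, hn, htor y⟩,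
    AddSubmonoid.mem_closure_finset'] at hx
  obtain ⟨c, rfl⟩ := hx
  refine ⟨fun a => ⟨c a % n, Nat.mod_lt _ hn⟩, Finset.sum_congr rfl fun a _ => ?_⟩
  conv_rhs => rw [← Nat.mod_add_div (c a) n, add_nsmul, mul_nsmul, htor, nsmul_zero, add_zero]

end AddSubgroup

namespace HasPruferRankLE

variable {M N K : Type*} [AddCommGroup M] [AddCommGroup N] [AddCommGroup K] {R a b : ℕ}

open AddSubgroup

theorem of_injective (f : M →+ N) (hf : Function.Injective f) (h : HasPruferRankLE N R) :
    HasPruferRankLE M R := by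
  classical
  intro S hS
  obtain ⟨t, ht, hts⟩ := h _ (hS.map f)
  obtain ⟨u, -, hinj, hut⟩ := Finset.exists_subset_injOn_image_eq_of_surjOn (S : Set M) t
    fun x hx => (hts ▸ subset_closure hx : x ∈ S.map f)
  refine ⟨u, (Finset.card_image_of_injOn hinj).symm.trans_le (hut ▸ ht), ?_⟩
  apply map_injective hf
  rw [AddMonoidHom.map_closure, ← Finset.coe_image, hut, hts]

theorem of_surjective (f : M →+ N) (hf : Function.Surjective f) (h : HasPruferRankLE M R) :
    HasPruferRankLE N R := by
  classical
  rintro T ⟨t, rfl⟩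
  obtain ⟨u, -, -, hut⟩ := Finset.exists_subset_injOn_image_eq_of_surjOn Set.univ t hf.surjOn
  obtain ⟨s, hs, hsu⟩ := h _ ⟨u, rfl⟩
  refine ⟨s.image f, Finset.card_image_le.trans hs, ?_⟩
  rw [Finset.coe_image, ← AddMonoidHom.map_closure, hsu, AddMonoidHom.map_closure,
    ← Finset.coe_image, hut]

theorem of_ker_le_range (f : M →+ N) (g : K →+ M) (hfg : f.ker ≤ g.range)
    (hK : HasPruferRankLE K a) (hN : HasPruferRankLE N b) : HasPruferRankLE M (a + b) := by
  classical
  intro S hS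
  -- `S` is generated by lifts of at most `b` generators of `f(S)` together with `g`-images of
  -- at most `a` elements generating `S ⊓ ker f`.
  obtain ⟨s, hs, hsS⟩ := hN _ (hS.map f)
  obtain ⟨u, huS, hu_inj, hus⟩ := Finset.exists_subset_injOn_image_eq_of_surjOn (S : Set M) s
    fun x hx => (hsS ▸ subset_closure hx : x ∈ S.map f)
  obtain ⟨v, hv⟩ := hS.of_le (inf_le_left : S ⊓ f.ker ≤ S)
  obtain ⟨w, -, -, hwv⟩ := Finset.exists_subset_injOn_image_eq_of_surjOn Set.univ v fun x hx => by
    obtain ⟨y, rfl⟩ := hfg (mem_inf.1 (hv ▸ subset_closure hx)).2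
    exact ⟨y, trivial, rfl⟩
  obtain ⟨t, ht, htw⟩ := hK _ ⟨w, rfl⟩
  refine ⟨t.image g ∪ u, Finset.card_union_le _ _ |>.trans <| add_le_add
    (Finset.card_image_le.trans ht) ((Finset.card_image_of_injOn hu_inj).symm.trans_le
      (hus ▸ hs)), ?_⟩
  have hker : closure (t.image g : Set M) = S ⊓ f.ker := by
    rw [Finset.coe_image, ← AddMonoidHom.map_closure, htw, AddMonoidHom.map_closure,
      ← Finset.coe_image, hwv, hv]
  rw [Finset.coe_union, AddSubgroup.closure_union, hker]
  refine inf_ker_sup_eq_of_map_eq ((closure_le _).2 huS) ?_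
  rw [AddMonoidHom.map_closure, ← Finset.coe_image, hus, hsS]

theorem prod (hM : HasPruferRankLE M a) (hN : HasPruferRankLE N b) :
    HasPruferRankLE (M × N) (a + b) :=
  of_ker_le_range (AddMonoidHom.snd M N) (AddMonoidHom.inl M N)
    (fun x hx => ⟨x.1, Prod.ext rfl hx.symm⟩) hM hN

theorem pi {ι : Type*} [Finite ι] (h : HasPruferRankLE M R) :
    HasPruferRankLE (ι → M) (Nat.card ι * R) := by
  induction ι using Finite.induction_empty_option with
  | of_equiv e ih =>
    rw [← Nat.card_congr e]
    exact of_injective (LinearEquiv.funCongrLeft ℤ M e).toAddMonoidHom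
      (LinearEquiv.funCongrLeft ℤ M e).injective ih
  | h_empty =>
    intro S _
    exact ⟨∅, by simp, Subsingleton.elim _ _⟩
  | h_option ih =>
    rw [Finite.card_option, add_one_mul, add_comm]
    exact of_injective (LinearEquiv.piOptionEquivProd ℤ).toAddMonoidHom
      (LinearEquiv.piOptionEquivProd ℤ).injective (h.prod ih)

theorem finite_of_nsmul_eq_zero {n : ℕ} (h : HasPruferRankLE M R) (hn : 0 < n)
    (htor : ∀ x : M, n • x = 0) : Finite M := by
  classical
  by_contra hM
  have := not_finite_iff_infinite.1 hM
  obtain ⟨s, hs⟩ := Infinite.exists_subset_card_eq M (n ^ R + 1)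
  obtain ⟨t, ht, hts⟩ := h _ ⟨s, rfl⟩
  set φ : (t → Fin n) → M := fun c => ∑ a, (c a : ℕ) • (a : M)
  have hsub : s ⊆ Finset.univ.image φ := fun x hx => by
    obtain ⟨c, rfl⟩ := closure_subset_range_sum_nsmul hn htor t (hts ▸ subset_closure hx)
    exact Finset.mem_image_of_mem φ (Finset.mem_univ c)
  have hcard : s.card ≤ n ^ t.card :=
    calc s.card ≤ (Finset.univ.image φ).card := Finset.card_le_card hsub
      _ ≤ Fintype.card (t → Fin n) := Finset.card_image_le
      _ = n ^ t.card := by simp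
  have := Nat.pow_le_pow_right hn ht
  omega

end HasPruferRankLE

namespace groupCohomology

universe u

variable {k G : Type u} [CommRing k] [Group G] [Finite G] {A : Rep k G}

theorem natCard_nsmul_mem_coboundaries₁ (z : cocycles₁ A) :
    Nat.card G • ⇑z ∈ coboundaries₁ A := by
  have := Fintype.ofFinite G
  refine ⟨-∑ h, z h, funext fun g => ?_⟩
  have hsum : ∑ h, z (g * h) = A.ρ g (∑ h, z h) + Nat.card G • z g := by
    rw [Finset.sum_congr rfl fun h _ => (mem_cocycles₁_iff (z : G → A)).1 z.2 g h,
      Finset.sum_add_distrib, map_sum, Finset.sum_const, Finset.card_univ, Nat.card_eq_fintype_card]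
  rw [Fintype.sum_bijective _ (Group.mulLeft_bijective g) _ _ fun _ => rfl] at hsum
  rw [d₀₁_hom_apply, map_neg, Pi.smul_apply, neg_sub_neg]
  exact sub_eq_iff_eq_add'.2 hsum

theorem natCard_nsmul_H1_eq_zero (x : H1 A) : Nat.card G • x = 0 := by
  induction x using H1_induction_on with | h z =>
  rw [← map_nsmul, H1π_eq_zero_iff]
  exact natCard_nsmul_mem_coboundaries₁ z

end groupCohomology

open groupCohomology

/-- The finiteness of `H¹(H, A)` for a finite group `H` acting on an abelian group `A`
of finite Prüfer rank (used in Lemma 3.2 of the paper). -/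
theorem stmt11 (H : Type) [Group H] [Finite H]
    (A : Type) [AddCommGroup A] [DistribMulAction H A]
    (r : ℕ)
    (hrank : ∀ S : AddSubgroup A, S.FG →
      ∃ s : Finset A, s.card ≤ r ∧ AddSubgroup.closure (s : Set A) = S) :
    Finite (groupCohomology.H1 (Rep.ofDistribMulAction ℤ H A)) := by
  set ρ := Rep.ofDistribMulAction ℤ H A
  have hA : HasPruferRankLE A r := hrank
  have hcocycles : HasPruferRankLE (cocycles₁ ρ) (Nat.card H * r) :=
    hA.pi.of_injective (cocycles₁ ρ).subtype.toAddMonoidHom Subtype.val_injective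
  have hH1 : HasPruferRankLE (H1 ρ) (Nat.card H * r) :=
    hcocycles.of_surjective (H1π ρ).hom.toAddMonoidHom
      ((ModuleCat.epi_iff_surjective _).1 inferInstance)
  exact hH1.finite_of_nsmul_eq_zero Nat.card_pos natCard_nsmul_H1_eq_zero
end

section
/- Let F be a finite group, let V be a vector space over ℚ, and let φ be an action of F on V by additive automorphisms. Form the semidirect product Γ = V ⋊_φ F. Then every finite subgroup L of Γ is conjugate, by an element of the canonical normal copy of V in Γ, to a subgroup of the canonical copy of F. -/
/-!
The left components `ℓ ↦ ℓ.left` of a finite subgroup `L ≤ V ⋊ F` form a 1-cocycle of `L` with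
values in `V`, on which `L` acts through its image in `F`. A 1-cocycle `f` of a finite group `G`
with values in a `ℚ`-module is a coboundary: summing `f (g * h) = g • f h + f g` over `h` shows
that `-(1 / |G|) • ∑ h, f h` is a primitive. Conjugating by that primitive, viewed in `V`, makes
every left component trivial.
-/

open groupCohomology SemidirectProduct

theorem groupCohomology.isCoboundary₁_of_isCocycle₁_of_finite {G A : Type*} [Group G] [Finite G]
    [AddCommGroup A] [Module ℚ A] [DistribSMul G A] {f : G → A} (hf : IsCocycle₁ f) :
    IsCoboundary₁ f := by
  have := Fintype.ofFinite G
  set n := Fintype.card G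
  set S := ∑ h, f h
  have hn : (n : ℚ) ≠ 0 := Nat.cast_ne_zero.2 Fintype.card_ne_zero
  refine ⟨-((n : ℚ)⁻¹ • S), fun g => ?_⟩
  let ρ := DistribSMul.toAddMonoidHom A g
  have hS : S = ρ S + n • f g := calc
    S = ∑ h, f (g * h) := (Fintype.sum_equiv (Equiv.mulLeft g) _ _ fun _ => rfl).symm
    _ = ρ S + n • f g := by
      simp only [hf g, Finset.sum_add_distrib, Finset.sum_const, Finset.card_univ, n, S, map_sum,
        ρ, DistribSMul.toAddMonoidHom_apply]
  calc ρ (-((n : ℚ)⁻¹ • S)) - -((n : ℚ)⁻¹ • S) = (n : ℚ)⁻¹ • (S - ρ S) := by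
        rw [map_neg, map_rat_smul, smul_sub]; abel
    _ = f g := by
        rw [sub_eq_of_eq_add' hS, ← Nat.cast_smul_eq_nsmul ℚ, inv_smul_smul₀ hn]

theorem SemidirectProduct.mem_range_inr_iff {N G : Type*} [Group N] [Group G]
    {φ : G →* MulAut N} {x : N ⋊[φ] G} : x ∈ (inr : G →* N ⋊[φ] G).range ↔ x.left = 1 := by
  constructor
  · rintro ⟨g, rfl⟩
    rfl
  · intro h
    exact ⟨x.right, by ext <;> simp [h]⟩

section

variable {G V : Type*} [Group G] [AddCommGroup V] {φ : G →* MulAut (Multiplicative V)}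

theorem SemidirectProduct.isCocycle₁_toAdd_left (L : Subgroup (Multiplicative V ⋊[φ] G))
    [SMul L V]
    (hsmul : ∀ (ℓ : L) v, ℓ • v = (φ (ℓ : Multiplicative V ⋊[φ] G).right (.ofAdd v)).toAdd) :
    IsCocycle₁ fun ℓ : L => (ℓ : Multiplicative V ⋊[φ] G).left.toAdd := by
  intro ℓ k
  rw [hsmul, add_comm]
  rfl

theorem SemidirectProduct.conj_inl_mem_range_inr {x : Multiplicative V ⋊[φ] G} {w : V}
    (hw : (φ x.right (.ofAdd w)).toAdd - w = x.left.toAdd) :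
    MulAut.conj (inl (.ofAdd w)) x ∈ (inr : G →* Multiplicative V ⋊[φ] G).range := by
  rw [mem_range_inr_iff]
  simp only [MulAut.conj_apply, mul_left, mul_right, inv_left, left_inl, right_inl,
    inv_one, map_one, MulAut.one_apply, one_mul, map_inv]
  apply Multiplicative.toAdd.injective
  rw [toAdd_mul, toAdd_mul, toAdd_inv, ← hw, toAdd_ofAdd, toAdd_one]
  abel

end

theorem stmt12_general (F : Type) [Group F]
    (V : Type) [AddCommGroup V] [Module ℚ V]
    (φ : F →* MulAut (Multiplicative V))
    (L : Subgroup (Multiplicative V ⋊[φ] F)) (hL : Finite L) :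
    ∃ g ∈ SemidirectProduct.inl.range,
      L.map (MulAut.conj g).toMonoidHom ≤ SemidirectProduct.inr.range := by
  let _ : DistribSMul L V :=
    { smul := fun ℓ v => (φ (ℓ : Multiplicative V ⋊[φ] F).right (.ofAdd v)).toAdd
      smul_zero := fun ℓ => map_one (φ (ℓ : Multiplicative V ⋊[φ] F).right)
      smul_add := fun ℓ => map_mul (φ (ℓ : Multiplicative V ⋊[φ] F).right) }
  obtain ⟨w, hw⟩ := isCoboundary₁_of_isCocycle₁_of_finite
    (isCocycle₁_toAdd_left L fun _ _ => rfl)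
  refine ⟨inl (.ofAdd w), ⟨_, rfl⟩, ?_⟩
  rintro _ ⟨x, hx, rfl⟩
  exact conj_inl_mem_range_inr (hw ⟨x, hx⟩)

/-- Used in the proof of Proposition 3.5: if a finite group `F` acts on a `ℚ`-vector
space `V` by automorphisms of its additive group, then every finite subgroup of the
semidirect product `V ⋊ F` is conjugate, by an element of the canonical normal copy of
`V`, to a subgroup of the canonical copy of `F`. -/
theorem stmt12 (F : Type) [Group F] [Finite F]
    (V : Type) [AddCommGroup V] [Module ℚ V]
    (φ : F →* MulAut (Multiplicative V))
    (L : Subgroup (Multiplicative V ⋊[φ] F)) (hL : Finite L) :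
    ∃ g ∈ SemidirectProduct.inl.range,
      L.map (MulAut.conj g).toMonoidHom ≤ SemidirectProduct.inr.range :=
  stmt12_general F V φ L hL
end
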